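/- Let n ≥ 1, let A = (a^{ij}) be a symmetric positive-definite n×n real matrix, let b ∈ ℝⁿ, and let H : ℝ → ℝ → ℝ be three times continuously differentiable on an open set U ⊆ (0,∞) × ℝ. For y ∈ ℝⁿ set α(y) = √(yᵀAy), β(y) = bᵀy, Y(y) = Ay, and F(y) = (1/2)H(α(y), β(y)). Then at every y ≠ 0 with (α(y), β(y)) ∈ U, the third partial derivatives of F satisfy ∂³F/∂y_i∂y_j∂y_k = r₋₁·b^i b^j b^k + Σ_{cyc(i,j,k)} [ ρ₋₁·a^{ij} b^k + ρ₋₂·a^{ij} Y^k + r₋₂·b^i b^j Y^k + r₋₃·b^i Y^j Y^k ] + r₋₄·Y^i Y^j Y^k, where Σ_{cyc(i,j,k)} denotes the sum over the three cyclic permutations of (i,j,k), and the invariants ρ₋₁ = (1/(2α))H_αβ, ρ₋₂ = (1/(2α²))(H_αα − α⁻¹H_α), r₋₁ = (1/2)H_βββ, r₋₂ = (1/(2α))H_αββ, r₋₃ = (1/(2α²))(H_ααβ − α⁻¹H_αβ), r₋₄ = (1/(2α³))(H_ααα − 3α⁻¹H_αα + 3α⁻²H_α) are evaluated at (α(y),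 β(y)). Equivalently, the Cartan tensor C^{ijk} = −(1/2)∂³F/∂y_i∂y_j∂y_k of the Cartan space with (α,β)-metric H equals −(1/2) times this expression. -/

import Mathlib

open Matrix

/-- Partial derivative with respect to the first variable (α). -/
noncomputable def dA (H : ℝ → ℝ → ℝ) : ℝ → ℝ → ℝ := fun a b => deriv (fun s => H s b) a

/-- Partial derivative with respect to the second variable (β). -/
noncomputable def dB (H : ℝ → ℝ → ℝ) : ℝ → ℝ → ℝ := fun a b => deriv (fun t => H a t) b

/-- Partial derivative of a function on `ℝⁿ` with respect to the `i`-th coordinate. -/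
noncomputable def pder {n : ℕ} (i : Fin n) (F : (Fin n → ℝ) → ℝ) : (Fin n → ℝ) → ℝ :=
  fun y => deriv (fun t => F (Function.update y i t)) (y i)

open Function Filter Topology Set

/-!
Write `L = α⁻¹ ∂_α` (`dAOverA`) and `M = ∂_β` (`dB`). Since `∂_i α = Yⁱ / α` and `∂_i β = bⁱ`, the
chain rule along a coordinate line reads `∂_i [g(α, β)] = (L g) Yⁱ + (M g) bⁱ`, and `∂_j Yⁱ = aⁱʲ`.
Applying this three times to `H`, and commuting `L` past `M` (symmetry of second derivatives),
gives `∂³ H(α, β)` as a cyclically symmetric polynomial in `a`, `b`, `Y` whose coefficients are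
`L³H, L²MH, LM²H, M³H, L²H, LMH`. These are twice `r₋₄, r₋₃, r₋₂, r₋₁, ρ₋₂, ρ₋₁`, as one sees by
expanding `L²` and `L³` in terms of `∂_α`.
-/

noncomputable def dAOverA (g : ℝ → ℝ → ℝ) : ℝ → ℝ → ℝ := fun a b => a⁻¹ * dA g a b

section Slices

variable {E : Type*} [NormedAddCommGroup E] [NormedSpace ℝ E] {φ : ℝ × ℝ → E}
  {φ' : ℝ × ℝ →L[ℝ] E} {p : ℝ × ℝ}

lemma HasFDerivAt.hasDerivAt_fst_slice (h : HasFDerivAt φ φ' p) :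
    HasDerivAt (fun s => φ (s, p.2)) (φ' (1, 0)) p.1 :=
  h.comp_hasDerivAt p.1 ((hasDerivAt_id p.1).prodMk (hasDerivAt_const p.1 p.2))

lemma HasFDerivAt.hasDerivAt_snd_slice (h : HasFDerivAt φ φ' p) :
    HasDerivAt (fun t => φ (p.1, t)) (φ' (0, 1)) p.2 :=
  h.comp_hasDerivAt p.2 ((hasDerivAt_const p.2 p.1).prodMk (hasDerivAt_id p.2))

end Slices

lemma ContinuousLinearMap.map_prod_eq (L : ℝ × ℝ →L[ℝ] ℝ) (u v : ℝ) :
    L (u, v) = u * L (1, 0) + v * L (0, 1) := by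
  have : ((u, v) : ℝ × ℝ) = u • ((1 : ℝ), (0 : ℝ)) + v • ((0 : ℝ), (1 : ℝ)) := by simp
  rw [this, map_add, map_smul, map_smul, smul_eq_mul, smul_eq_mul]

section PartialDerivatives

variable {g g' : ℝ → ℝ → ℝ} {U : Set (ℝ × ℝ)} {p : ℝ × ℝ}

lemma dA_eq_fderiv (hg : DifferentiableAt ℝ (uncurry g) p) :
    dA g p.1 p.2 = fderiv ℝ (uncurry g) p (1, 0) :=
  hg.hasFDerivAt.hasDerivAt_fst_slice.deriv

lemma dB_eq_fderiv (hg : DifferentiableAt ℝ (uncurry g) p) :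
    dB g p.1 p.2 = fderiv ℝ (uncurry g) p (0, 1) :=
  hg.hasFDerivAt.hasDerivAt_snd_slice.deriv

lemma DifferentiableAt.differentiableAt_fst_slice (hg : DifferentiableAt ℝ (uncurry g) p) :
    DifferentiableAt ℝ (fun s => g s p.2) p.1 :=
  hg.hasFDerivAt.hasDerivAt_fst_slice.differentiableAt

lemma dA_congr (h : uncurry g =ᶠ[𝓝 p] uncurry g') : dA g p.1 p.2 = dA g' p.1 p.2 :=
  (h.comp_tendsto ((Continuous.prodMk_left p.2).tendsto' p.1 p rfl)).deriv_eq

lemma hasFDerivAt_uncurry_dA (hg : ∀ᶠ q in 𝓝 p, DifferentiableAt ℝ (uncurry g) q)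
    (hg' : DifferentiableAt ℝ (fderiv ℝ (uncurry g)) p) :
    HasFDerivAt (uncurry (dA g))
      ((ContinuousLinearMap.apply ℝ ℝ ((1 : ℝ), (0 : ℝ))).comp
        (fderiv ℝ (fderiv ℝ (uncurry g)) p)) p := by
  refine ((ContinuousLinearMap.apply ℝ ℝ _).hasFDerivAt.comp p hg'.hasFDerivAt
    ).congr_of_eventuallyEq ?_
  filter_upwards [hg] with q hq using dA_eq_fderiv hq

lemma hasFDerivAt_uncurry_dB (hg : ∀ᶠ q in 𝓝 p, DifferentiableAt ℝ (uncurry g) q)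
    (hg' : DifferentiableAt ℝ (fderiv ℝ (uncurry g)) p) :
    HasFDerivAt (uncurry (dB g))
      ((ContinuousLinearMap.apply ℝ ℝ ((0 : ℝ), (1 : ℝ))).comp
        (fderiv ℝ (fderiv ℝ (uncurry g)) p)) p := by
  refine ((ContinuousLinearMap.apply ℝ ℝ _).hasFDerivAt.comp p hg'.hasFDerivAt
    ).congr_of_eventuallyEq ?_
  filter_upwards [hg] with q hq using dB_eq_fderiv hq

lemma dB_dA_comm (hg : ContDiffAt ℝ 2 (uncurry g) p) : dB (dA g) p.1 p.2 = dA (dB g) p.1 p.2 := by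
  have hdiff : ∀ᶠ q in 𝓝 p, DifferentiableAt ℝ (uncurry g) q :=
    (hg.eventually (by simp)).mono fun q hq => hq.differentiableAt (by norm_num)
  have hdiff' : DifferentiableAt ℝ (fderiv ℝ (uncurry g)) p :=
    (hg.fderiv_right (m := 1) (by norm_num)).differentiableAt one_ne_zero
  calc dB (dA g) p.1 p.2 = fderiv ℝ (fderiv ℝ (uncurry g)) p (0, 1) (1, 0) :=
        (hasFDerivAt_uncurry_dA hdiff hdiff').hasDerivAt_snd_slice.deriv
    _ = fderiv ℝ (fderiv ℝ (uncurry g)) p (1, 0) (0, 1) := hg.isSymmSndFDerivAt (by simp) _ _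
    _ = dA (dB g) p.1 p.2 := (hasFDerivAt_uncurry_dB hdiff hdiff').hasDerivAt_fst_slice.deriv.symm

lemma dB_dAOverA_comm (hg : ContDiffAt ℝ 2 (uncurry g) p) :
    dB (dAOverA g) p.1 p.2 = dAOverA (dB g) p.1 p.2 := by
  rw [dAOverA, ← dB_dA_comm hg]
  exact congrFun (deriv_const_mul_field' _) p.2

lemma dAOverA_congr (h : uncurry g =ᶠ[𝓝 p] uncurry g') :
    dAOverA g p.1 p.2 = dAOverA g' p.1 p.2 := by
  rw [dAOverA, dAOverA, dA_congr h]

variable {m : WithTop ℕ∞}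

lemma ContDiffOn.uncurry_dA (hU : IsOpen U) (hg : ContDiffOn ℝ (m + 1) (uncurry g) U) :
    ContDiffOn ℝ m (uncurry (dA g)) U := by
  refine ((ContinuousLinearMap.apply ℝ ℝ ((1 : ℝ), (0 : ℝ))).contDiff.comp_contDiffOn
    (hg.fderiv_of_isOpen hU le_rfl)).congr fun q hq => ?_
  exact dA_eq_fderiv ((hg.differentiableOn (by simp)).differentiableAt (hU.mem_nhds hq))

lemma ContDiffOn.uncurry_dB (hU : IsOpen U) (hg : ContDiffOn ℝ (m + 1) (uncurry g) U) :
    ContDiffOn ℝ m (uncurry (dB g)) U := by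
  refine ((ContinuousLinearMap.apply ℝ ℝ ((0 : ℝ), (1 : ℝ))).contDiff.comp_contDiffOn
    (hg.fderiv_of_isOpen hU le_rfl)).congr fun q hq => ?_
  exact dB_eq_fderiv ((hg.differentiableOn (by simp)).differentiableAt (hU.mem_nhds hq))

lemma ContDiffOn.uncurry_dAOverA (hU : IsOpen U) (hU0 : ∀ q ∈ U, q.1 ≠ 0)
    (hg : ContDiffOn ℝ (m + 1) (uncurry g) U) : ContDiffOn ℝ m (uncurry (dAOverA g)) U :=
  (contDiffOn_fst.inv hU0).mul (hg.uncurry_dA hU)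

end PartialDerivatives

section IteratedDAOverA

variable {g : ℝ → ℝ → ℝ} {U : Set (ℝ × ℝ)} {p : ℝ × ℝ}

lemma ContDiffOn.differentiableAt_fst_slice (hU : IsOpen U) (hg : ContDiffOn ℝ 1 (uncurry g) U)
    (hp : p ∈ U) : DifferentiableAt ℝ (fun s => g s p.2) p.1 :=
  ((hg.differentiableOn one_ne_zero).differentiableAt (hU.mem_nhds hp)).differentiableAt_fst_slice

lemma dAOverA_dAOverA (hU : IsOpen U) (hU0 : ∀ q ∈ U, q.1 ≠ 0)
    (hg : ContDiffOn ℝ 2 (uncurry g) U) (hp : p ∈ U) :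
    dAOverA (dAOverA g) p.1 p.2 = p.1⁻¹ ^ 2 * (dA (dA g) p.1 p.2 - p.1⁻¹ * dA g p.1 p.2) := by
  have hg' : ContDiffOn ℝ (1 + 1) (uncurry g) U := hg
  have h : HasDerivAt (fun s => s⁻¹ * dA g s p.2)
      (-(p.1 ^ 2)⁻¹ * dA g p.1 p.2 + p.1⁻¹ * dA (dA g) p.1 p.2) p.1 :=
    (hasDerivAt_inv (hU0 p hp)).mul
      ((hg'.uncurry_dA hU).differentiableAt_fst_slice hU hp).hasDerivAt
  change p.1⁻¹ * deriv (fun s => s⁻¹ * dA g s p.2) p.1 = _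
  rw [h.deriv]
  ring

lemma dAOverA_dAOverA_dAOverA (hU : IsOpen U) (hU0 : ∀ q ∈ U, q.1 ≠ 0)
    (hg : ContDiffOn ℝ 3 (uncurry g) U) (hp : p ∈ U) :
    dAOverA (dAOverA (dAOverA g)) p.1 p.2 = p.1⁻¹ ^ 3 * (dA (dA (dA g)) p.1 p.2
      - 3 * p.1⁻¹ * dA (dA g) p.1 p.2 + 3 * p.1⁻¹ ^ 2 * dA g p.1 p.2) := by
  have hg' : ContDiffOn ℝ (2 + 1) (uncurry g) U := hg
  have hdA : ContDiffOn ℝ (1 + 1) (uncurry (dA g)) U := hg'.uncurry_dA hU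
  have heq : (fun s => dAOverA (dAOverA g) s p.2) =ᶠ[𝓝 p.1]
      fun s => s⁻¹ ^ 2 * (dA (dA g) s p.2 - s⁻¹ * dA g s p.2) := by
    filter_upwards [(Continuous.prodMk_left p.2).continuousAt.preimage_mem_nhds
      (hU.mem_nhds hp)] with s hs using dAOverA_dAOverA hU hU0 (hg.of_le (by norm_num)) hs
  have hinv := hasDerivAt_inv (hU0 p hp)
  have h : HasDerivAt (fun s => s⁻¹ ^ 2 * (dA (dA g) s p.2 - s⁻¹ * dA g s p.2))
      (2 * p.1⁻¹ * -(p.1 ^ 2)⁻¹ * (dA (dA g) p.1 p.2 - p.1⁻¹ * dA g p.1 p.2) + p.1⁻¹ ^ 2 *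
        (dA (dA (dA g)) p.1 p.2 - (-(p.1 ^ 2)⁻¹ * dA g p.1 p.2 + p.1⁻¹ * dA (dA g) p.1 p.2))) p.1 :=
    ((hinv.pow 2).mul (((hdA.uncurry_dA hU).differentiableAt_fst_slice hU hp).hasDerivAt.sub
      (hinv.mul ((hdA.of_le one_le_two).differentiableAt_fst_slice hU hp).hasDerivAt))
      ).congr_deriv (by simp [dA])
  change p.1⁻¹ * deriv (fun s => dAOverA (dAOverA g) s p.2) p.1 = _
  rw [heq.deriv_eq, h.deriv]
  have ha := hU0 p hp
  field_simp
  ring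

end IteratedDAOverA

section CoordinateLines

variable {n : ℕ} (A : Matrix (Fin n) (Fin n) ℝ) (b z : Fin n → ℝ) (j : Fin n)

lemma update_eq_add_smul_single (t : ℝ) : update z j t = z + (t - z j) • Pi.single j 1 := by
  ext i
  rcases eq_or_ne i j with rfl | h <;> simp [*]

lemma hasDerivAt_add_sub_mul (c d x : ℝ) : HasDerivAt (fun t => c + (t - x) * d) d x := by
  simpa using (((hasDerivAt_id x).sub_const x).mul_const d).const_add c

lemma hasDerivAt_dotProduct_update : HasDerivAt (fun t => b ⬝ᵥ update z j t) (b j) (z j) := by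
  have h (t : ℝ) : b ⬝ᵥ update z j t = b ⬝ᵥ z + (t - z j) * b j := by
    rw [update_eq_add_smul_single, dotProduct_add, dotProduct_smul, dotProduct_single, smul_eq_mul,
      mul_one]
  simpa only [h] using hasDerivAt_add_sub_mul _ _ _

lemma hasDerivAt_mulVec_update_apply (i : Fin n) :
    HasDerivAt (fun t => (A *ᵥ update z j t) i) (A i j) (z j) := by
  have h (t : ℝ) : (A *ᵥ update z j t) i = (A *ᵥ z) i + (t - z j) * A i j := by
    simp [update_eq_add_smul_single, mulVec_add, mulVec_smul]
  simpa only [h] using hasDerivAt_add_sub_mul _ _ _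

lemma hasDerivAt_quadForm_update (hA : A.IsSymm) :
    HasDerivAt (fun t => update z j t ⬝ᵥ A *ᵥ update z j t) (2 * (A *ᵥ z) j) (z j) := by
  have hcol : z ⬝ᵥ A.col j = (A *ᵥ z) j := by
    rw [← mulVec_single_one, dotProduct_mulVec, dotProduct_single, mul_one, ← mulVec_transpose,
      hA.eq]
  have h (t : ℝ) : update z j t ⬝ᵥ A *ᵥ update z j t
      = z ⬝ᵥ A *ᵥ z + (t - z j) * (2 * (A *ᵥ z) j) + (t - z j) ^ 2 * A j j := by
    simp only [update_eq_add_smul_single, mulVec_add, mulVec_smul, mulVec_single_one,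
      add_dotProduct, dotProduct_add, smul_dotProduct, dotProduct_smul, single_dotProduct,
      hcol, smul_eq_mul, one_mul, col_apply]
    ring
  have hsq := (((hasDerivAt_id (z j)).sub_const (z j)).pow 2).mul_const (A j j)
  have hpoly : HasDerivAt
      (fun t => z ⬝ᵥ A *ᵥ z + (t - z j) * (2 * (A *ᵥ z) j) + (t - z j) ^ 2 * A j j)
      (2 * (A *ᵥ z) j) (z j) :=
    ((hasDerivAt_add_sub_mul _ _ _).add hsq).congr_deriv (by simp)
  simpa only [h] using hpoly

end CoordinateLines

section AlphaBeta

variable {n : ℕ} (A : Matrix (Fin n) (Fin n) ℝ) (b : Fin n → ℝ)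

noncomputable def alphaBeta (z : Fin n → ℝ) : ℝ × ℝ := (√(z ⬝ᵥ A *ᵥ z), b ⬝ᵥ z)

lemma continuous_alphaBeta : Continuous (alphaBeta A b) := by
  unfold alphaBeta
  fun_prop

variable {A} {z : Fin n → ℝ} (j : Fin n)

lemma hasDerivAt_alphaBeta_update (hA : A.IsSymm) (hz : 0 < z ⬝ᵥ A *ᵥ z) :
    HasDerivAt (fun t => alphaBeta A b (update z j t))
      ((alphaBeta A b z).1⁻¹ * (A *ᵥ z) j, b j) (z j) := by
  refine HasDerivAt.prodMk ?_ (hasDerivAt_dotProduct_update b z j)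
  refine ((hasDerivAt_quadForm_update A z j hA).sqrt (by simpa using hz.ne')).congr_deriv ?_
  simp only [update_eq_self, alphaBeta]
  field_simp

lemma hasDerivAt_comp_alphaBeta_update {g : ℝ → ℝ → ℝ} (hA : A.IsSymm) (hz : 0 < z ⬝ᵥ A *ᵥ z)
    (hg : DifferentiableAt ℝ (uncurry g) (alphaBeta A b z)) :
    HasDerivAt (fun t => uncurry g (alphaBeta A b (update z j t)))
      (uncurry (dAOverA g) (alphaBeta A b z) * (A *ᵥ z) j
        + uncurry (dB g) (alphaBeta A b z) * b j) (z j) := by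
  refine (hg.hasFDerivAt.comp_hasDerivAt_of_eq (z j) (hasDerivAt_alphaBeta_update b j hA hz)
    (by simp)).congr_deriv ?_
  rw [ContinuousLinearMap.map_prod_eq, ← dA_eq_fderiv hg, ← dB_eq_fderiv hg]
  simp only [uncurry, dAOverA]
  ring

end AlphaBeta

section CoordinatePartials

variable {n : ℕ} (j : Fin n)

lemma pder_congr {F G : (Fin n → ℝ) → ℝ} {V : Set (Fin n → ℝ)} {z : Fin n → ℝ} (hV : IsOpen V)
    (h : EqOn F G V) (hz : z ∈ V) : pder j F z = pder j G z := by
  have hcont : Continuous (update z j) := continuous_const.update j continuous_id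
  have hmem : ∀ᶠ t in 𝓝 (z j), update z j t ∈ V :=
    hcont.continuousAt.preimage_mem_nhds (by rw [update_eq_self]; exact hV.mem_nhds hz)
  exact EventuallyEq.deriv_eq (hmem.mono fun t ht => h ht)

lemma pder_const_mul (c : ℝ) (F : (Fin n → ℝ) → ℝ) :
    pder j (fun z => c * F z) = fun z => c * pder j F z :=
  funext fun z => congrFun (deriv_const_mul_field' c) (z j)

end CoordinatePartials

section ThirdDerivative

variable {n : ℕ} {A : Matrix (Fin n) (Fin n) ℝ} {b : Fin n → ℝ} {U : Set (ℝ × ℝ)}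
  {g H : ℝ → ℝ → ℝ} {z : Fin n → ℝ}

lemma hasDerivAt_comp_alphaBeta_update_of_mem (hA : A.IsSymm) (hU : IsOpen U)
    (hU0 : ∀ p ∈ U, 0 < p.1) (hg : ContDiffOn ℝ 1 (uncurry g) U) (hz : alphaBeta A b z ∈ U)
    (j : Fin n) :
    HasDerivAt (fun t => uncurry g (alphaBeta A b (update z j t)))
      (uncurry (dAOverA g) (alphaBeta A b z) * (A *ᵥ z) j
        + uncurry (dB g) (alphaBeta A b z) * b j) (z j) :=
  hasDerivAt_comp_alphaBeta_update b j hA (Real.sqrt_pos.1 (hU0 _ hz))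
    ((hg.differentiableOn one_ne_zero).differentiableAt (hU.mem_nhds hz))

lemma eqOn_pder_comp_alphaBeta (hA : A.IsSymm) (hU : IsOpen U) (hU0 : ∀ p ∈ U, 0 < p.1)
    (hg : ContDiffOn ℝ 1 (uncurry g) U) (i : Fin n) :
    EqOn (pder i fun z => uncurry g (alphaBeta A b z))
      (fun z => uncurry (dAOverA g) (alphaBeta A b z) * (A *ᵥ z) i
        + uncurry (dB g) (alphaBeta A b z) * b i) (alphaBeta A b ⁻¹' U) :=
  fun _ hz => (hasDerivAt_comp_alphaBeta_update_of_mem hA hU hU0 hg hz i).deriv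

lemma eqOn_pder_pder_comp_alphaBeta (hA : A.IsSymm) (hU : IsOpen U) (hU0 : ∀ p ∈ U, 0 < p.1)
    (hH : ContDiffOn ℝ 2 (uncurry H) U) (i j : Fin n) :
    EqOn (pder j (pder i fun z => uncurry H (alphaBeta A b z)))
      (fun z => uncurry (dAOverA (dAOverA H)) (alphaBeta A b z) * (A *ᵥ z) i * (A *ᵥ z) j
        + uncurry (dAOverA (dB H)) (alphaBeta A b z) * (b i * (A *ᵥ z) j + b j * (A *ᵥ z) i)
        + uncurry (dAOverA H) (alphaBeta A b z) * A i j
        + uncurry (dB (dB H)) (alphaBeta A b z) * b i * b j) (alphaBeta A b ⁻¹' U) := by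
  intro z hz
  have hU0' : ∀ p ∈ U, p.1 ≠ 0 := fun p hp => (hU0 p hp).ne'
  have hH' : ContDiffOn ℝ (1 + 1) (uncurry H) U := hH
  have hL := hasDerivAt_comp_alphaBeta_update_of_mem hA hU hU0 (hH'.uncurry_dAOverA hU hU0') hz j
  have hM := hasDerivAt_comp_alphaBeta_update_of_mem hA hU hU0 (hH'.uncurry_dB hU) hz j
  have hcomm := dB_dAOverA_comm (hH.contDiffAt (hU.mem_nhds hz))
  rw [pder_congr j (hU.preimage (continuous_alphaBeta A b))
    (eqOn_pder_comp_alphaBeta hA hU hU0 (hH.of_le one_le_two) i) hz]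
  refine ((hL.mul (hasDerivAt_mulVec_update_apply A z j i)).add (hM.mul_const (b i))).deriv.trans ?_
  simp only [uncurry, update_eq_self] at hcomm ⊢
  rw [hcomm]
  ring

lemma pder_pder_pder_comp_alphaBeta (hA : A.IsSymm) (hU : IsOpen U) (hU0 : ∀ p ∈ U, 0 < p.1)
    (hH : ContDiffOn ℝ 3 (uncurry H) U) (hz : alphaBeta A b z ∈ U) (i j k : Fin n) :
    pder k (pder j (pder i fun z => uncurry H (alphaBeta A b z))) z =
      uncurry (dAOverA (dAOverA (dAOverA H))) (alphaBeta A b z)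
          * (A *ᵥ z) i * (A *ᵥ z) j * (A *ᵥ z) k
        + uncurry (dAOverA (dAOverA (dB H))) (alphaBeta A b z) * (b i * (A *ᵥ z) j * (A *ᵥ z) k
          + b j * (A *ᵥ z) k * (A *ᵥ z) i + b k * (A *ᵥ z) i * (A *ᵥ z) j)
        + uncurry (dAOverA (dB (dB H))) (alphaBeta A b z) * (b i * b j * (A *ᵥ z) k
          + b j * b k * (A *ᵥ z) i + b k * b i * (A *ᵥ z) j)
        + uncurry (dAOverA (dAOverA H)) (alphaBeta A b z)
          * (A i j * (A *ᵥ z) k + A j k * (A *ᵥ z) i + A k i * (A *ᵥ z) j)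
        + uncurry (dAOverA (dB H)) (alphaBeta A b z) * (A i j * b k + A j k * b i + A k i * b j)
        + uncurry (dB (dB (dB H))) (alphaBeta A b z) * b i * b j * b k := by
  have hU0' : ∀ p ∈ U, p.1 ≠ 0 := fun p hp => (hU0 p hp).ne'
  have hH2 : ContDiffOn ℝ 2 (uncurry H) U := hH.of_le (by norm_num)
  have hH' : ContDiffOn ℝ (2 + 1) (uncurry H) U := hH
  have hL : ContDiffOn ℝ (1 + 1) (uncurry (dAOverA H)) U := hH'.uncurry_dAOverA hU hU0'
  have hM : ContDiffOn ℝ (1 + 1) (uncurry (dB H)) U := hH'.uncurry_dB hU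
  have hLL := hasDerivAt_comp_alphaBeta_update_of_mem hA hU hU0 (hL.uncurry_dAOverA hU hU0') hz k
  have hLM := hasDerivAt_comp_alphaBeta_update_of_mem hA hU hU0 (hM.uncurry_dAOverA hU hU0') hz k
  have hL1 := hasDerivAt_comp_alphaBeta_update_of_mem hA hU hU0 (hL.of_le one_le_two) hz k
  have hMM := hasDerivAt_comp_alphaBeta_update_of_mem hA hU hU0 (hM.uncurry_dB hU) hz k
  have hY (l : Fin n) := hasDerivAt_mulVec_update_apply A z k l
  have hcomm : ∀ q ∈ U, dB (dAOverA H) q.1 q.2 = dAOverA (dB H) q.1 q.2 :=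
    fun q hq => dB_dAOverA_comm (hH2.contDiffAt (hU.mem_nhds hq))
  have hcommL : dB (dAOverA (dAOverA H)) (alphaBeta A b z).1 (alphaBeta A b z).2
      = dAOverA (dAOverA (dB H)) (alphaBeta A b z).1 (alphaBeta A b z).2 :=
    (dB_dAOverA_comm (hL.contDiffAt (hU.mem_nhds hz))).trans
      (dAOverA_congr (Filter.eventually_of_mem (hU.mem_nhds hz) hcomm))
  have hcommM := dB_dAOverA_comm (hM.contDiffAt (hU.mem_nhds hz))
  rw [pder_congr k (hU.preimage (continuous_alphaBeta A b))
    (eqOn_pder_pder_comp_alphaBeta hA hU hU0 hH2 i j) hz]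
  refine (((((hLL.mul (hY i)).mul (hY j)).add
    (hLM.mul (((hY j).const_mul (b i)).add ((hY i).const_mul (b j))))).add
    (hL1.mul_const (A i j))).add ((hMM.mul_const (b i)).mul_const (b j))).deriv.trans ?_
  simp only [uncurry, update_eq_self, Pi.mul_apply, Pi.add_apply] at hcommL hcommM ⊢
  rw [hcomm _ hz, hcommL, hcommM, hA.apply i k]
  ring

end ThirdDerivative

theorem cartan_tensor_alpha_beta_general
    (n : ℕ)
    (A : Matrix (Fin n) (Fin n) ℝ) (hAsymm : A.IsSymm)
    (b : Fin n → ℝ)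
    (H : ℝ → ℝ → ℝ) (U : Set (ℝ × ℝ)) (hUopen : IsOpen U)
    (hUsub : U ⊆ Set.Ioi (0:ℝ) ×ˢ (Set.univ : Set ℝ))
    (hH : ContDiffOn ℝ 3 (Function.uncurry H) U)
    (y : Fin n → ℝ)
    (hmem : (Real.sqrt (y ⬝ᵥ A.mulVec y), b ⬝ᵥ y) ∈ U) :
    ∀ i j k : Fin n,
      let al := Real.sqrt (y ⬝ᵥ A.mulVec y)
      let be := b ⬝ᵥ y
      let Y := A.mulVec y
      let rhom1 := (1 / (2 * al)) * dA (dB H) al be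
      let rhom2 := (1 / (2 * al ^ 2)) * (dA (dA H) al be - al⁻¹ * dA H al be)
      let rm1 := (1 / 2) * dB (dB (dB H)) al be
      let rm2 := (1 / (2 * al)) * dA (dB (dB H)) al be
      let rm3 := (1 / (2 * al ^ 2)) * (dA (dA (dB H)) al be - al⁻¹ * dA (dB H) al be)
      let rm4 := (1 / (2 * al ^ 3)) *
        (dA (dA (dA H)) al be - 3 * al⁻¹ * dA (dA H) al be + 3 * al⁻¹ ^ 2 * dA H al be)
      pder k (pder j (pder i
            (fun z => (1 / 2) * H (Real.sqrt (z ⬝ᵥ A.mulVec z)) (b ⬝ᵥ z)))) y =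
          rm1 * b i * b j * b k
            + (rhom1 * A i j * b k + rhom2 * A i j * Y k
                + rm2 * b i * b j * Y k + rm3 * b i * Y j * Y k)
            + (rhom1 * A j k * b i + rhom2 * A j k * Y i
                + rm2 * b j * b k * Y i + rm3 * b j * Y k * Y i)
            + (rhom1 * A k i * b j + rhom2 * A k i * Y j
                + rm2 * b k * b i * Y j + rm3 * b k * Y i * Y j)
            + rm4 * Y i * Y j * Y k ∧
      -(1 / 2) * pder k (pder j (pder i
            (fun z => (1 / 2) * H (Real.sqrt (z ⬝ᵥ A.mulVec z)) (b ⬝ᵥ z)))) y =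
          -(1 / 2) * (rm1 * b i * b j * b k
            + (rhom1 * A i j * b k + rhom2 * A i j * Y k
                + rm2 * b i * b j * Y k + rm3 * b i * Y j * Y k)
            + (rhom1 * A j k * b i + rhom2 * A j k * Y i
                + rm2 * b j * b k * Y i + rm3 * b j * Y k * Y i)
            + (rhom1 * A k i * b j + rhom2 * A k i * Y j
                + rm2 * b k * b i * Y j + rm3 * b k * Y i * Y j)
            + rm4 * Y i * Y j * Y k) := by
  intro i j k
  dsimp only
  have hU0 : ∀ p ∈ U, 0 < p.1 := fun p hp => (hUsub hp).1
  have hU0' : ∀ p ∈ U, p.1 ≠ 0 := fun p hp => (hU0 p hp).ne'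
  have hH' : ContDiffOn ℝ (1 + 1 + 1) (uncurry H) U := hH
  have hy : alphaBeta A b y ∈ U := hmem
  have hthird := pder_pder_pder_comp_alphaBeta hAsymm hUopen hU0 hH hy i j k
  simp only [uncurry] at hthird
  rw [dAOverA_dAOverA_dAOverA hUopen hU0' hH hy,
    dAOverA_dAOverA hUopen hU0' (hH.of_le (by norm_num)) hy,
    dAOverA_dAOverA hUopen hU0' (hH'.uncurry_dB hUopen) hy] at hthird
  simp only [alphaBeta, dAOverA] at hthird
  refine ⟨?h, congrArg (fun x => -(1 / 2) * x) ?h⟩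
  rw [pder_const_mul, pder_const_mul, pder_const_mul]
  beta_reduce
  rw [hthird]
  ring

/-- The third derivatives of `F = (1/2)H(α,β)`, equivalently the Cartan tensor
`C^{ijk} = -(1/2) ∂³F/∂y_i∂y_j∂y_k` of a Cartan space with (α,β)-metric. -/
theorem cartan_tensor_alpha_beta
    (n : ℕ) (hn : 1 ≤ n)
    (A : Matrix (Fin n) (Fin n) ℝ) (hA : A.PosDef) (hAsymm : A.IsSymm)
    (b : Fin n → ℝ)
    (H : ℝ → ℝ → ℝ) (U : Set (ℝ × ℝ)) (hUopen : IsOpen U)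
    (hUsub : U ⊆ Set.Ioi (0:ℝ) ×ˢ (Set.univ : Set ℝ))
    (hH : ContDiffOn ℝ 3 (Function.uncurry H) U)
    (y : Fin n → ℝ) (hy : y ≠ 0)
    (hmem : (Real.sqrt (y ⬝ᵥ A.mulVec y), b ⬝ᵥ y) ∈ U) :
    ∀ i j k : Fin n,
      let al := Real.sqrt (y ⬝ᵥ A.mulVec y)
      let be := b ⬝ᵥ y
      let Y := A.mulVec y
      let rhom1 := (1 / (2 * al)) * dA (dB H) al be
      let rhom2 := (1 / (2 * al ^ 2)) * (dA (dA H) al be - al⁻¹ * dA H al be)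
      let rm1 := (1 / 2) * dB (dB (dB H)) al be
      let rm2 := (1 / (2 * al)) * dA (dB (dB H)) al be
      let rm3 := (1 / (2 * al ^ 2)) * (dA (dA (dB H)) al be - al⁻¹ * dA (dB H) al be)
      let rm4 := (1 / (2 * al ^ 3)) *
        (dA (dA (dA H)) al be - 3 * al⁻¹ * dA (dA H) al be + 3 * al⁻¹ ^ 2 * dA H al be)
      pder k (pder j (pder i
            (fun z => (1 / 2) * H (Real.sqrt (z ⬝ᵥ A.mulVec z)) (b ⬝ᵥ z)))) y =
          rm1 * b i * b j * b k
            + (rhom1 * A i j * b k + rhom2 * A i j * Y k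
                + rm2 * b i * b j * Y k + rm3 * b i * Y j * Y k)
            + (rhom1 * A j k * b i + rhom2 * A j k * Y i
                + rm2 * b j * b k * Y i + rm3 * b j * Y k * Y i)
            + (rhom1 * A k i * b j + rhom2 * A k i * Y j
                + rm2 * b k * b i * Y j + rm3 * b k * Y i * Y j)
            + rm4 * Y i * Y j * Y k ∧
      -(1 / 2) * pder k (pder j (pder i
            (fun z => (1 / 2) * H (Real.sqrt (z ⬝ᵥ A.mulVec z)) (b ⬝ᵥ z)))) y =
          -(1 / 2) * (rm1 * b i * b j * b k
            + (rhom1 * A i j * b k + rhom2 * A i j * Y k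
                + rm2 * b i * b j * Y k + rm3 * b i * Y j * Y k)
            + (rhom1 * A j k * b i + rhom2 * A j k * Y i
                + rm2 * b j * b k * Y i + rm3 * b j * Y k * Y i)
            + (rhom1 * A k i * b j + rhom2 * A k i * Y j
                + rm2 * b k * b i * Y j + rm3 * b k * Y i * Y j)
            + rm4 * Y i * Y j * Y k) :=
  cartan_tensor_alpha_beta_general n A hAsymm b H U hUopen hUsub hH y hmem
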